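/- arXiv:1010.2162 — 3 statements merged into one kernel-verified Lean document; each statement's English description precedes it below -/
import Mathlib

section
/- For any η > 0, the value limsup_{T→∞} (1/T) log Σ_{ω∈C, T−η < S_ω ψ ≤ T} exp(S_ω φ) equals the infimum of all β ∈ ℝ such that limsup_{T→∞} Σ_{ω∈C, T < S_ω ψ} exp(S_ω φ − β S_ω ψ) < ∞. In particular, the left-hand side is independent of the choice of η > 0. -/
open Filter Topology
open scoped ENNReal

variable {I : Type*}

/-- The topological Markov shift with alphabet `I` and incidence relation `A`. -/
abbrev Shift (A : I → I → Prop) := {x : ℕ → I // ∀ i, A (x i) (x (i + 1))}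

/-- The left shift map. -/
def shiftMap (A : I → I → Prop) : Shift A → Shift A :=
  fun x => ⟨fun n => x.1 (n + 1), fun i => x.2 (i + 1)⟩

/-- The set of admissible (nonempty) finite words. -/
def Words (A : I → I → Prop) : Set (List I) :=
  {w | w ≠ [] ∧ ∀ i, (h : i + 1 < w.length) → A (w.get ⟨i, by omega⟩) (w.get ⟨i + 1, h⟩)}

/-- The cylinder set of a finite word. -/
def cylinder (A : I → I → Prop) (w : List I) : Set (Shift A) :=
  {x | ∀ i, (h : i < w.length) → x.1 i = w.get ⟨i, h⟩}

/-- Birkhoff sum of length `n`. -/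
def birkhoff (A : I → I → Prop) (f : Shift A → ℝ) (n : ℕ) (x : Shift A) : ℝ :=
  ∑ k ∈ Finset.range n, f ((shiftMap A)^[k] x)

/-- `S_ω f`: the supremum over the cylinder of `ω` of the Birkhoff sum of length `|ω|`. -/
noncomputable def S (A : I → I → Prop) (f : Shift A → ℝ) (w : List I) : ℝ :=
  sSup (birkhoff A f w.length '' cylinder A w)

/-- Logarithm on `ℝ≥0∞` with values in `EReal`. -/
noncomputable def elog (x : ℝ≥0∞) : EReal :=
  if x = 0 then ⊥ else if x = ⊤ then ⊤ else ((Real.log x.toReal : ℝ) : EReal)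

/-- The partition function `Σ_{ω∈C, T−η<S_ω ψ≤T} exp (S_ω φ)`. -/
noncomputable def partSum (A : I → I → Prop) (φ ψ : Shift A → ℝ) (C : Set (List I))
    (η T : ℝ) : ℝ≥0∞ :=
  ∑' w : {w : List I // w ∈ C ∧ T - η < S A ψ w ∧ S A ψ w ≤ T},
    ENNReal.ofReal (Real.exp (S A φ w.1))

/-- The `ψ`-induced pressure of `φ` with respect to `C` (with parameter `η`). -/
noncomputable def pressure (A : I → I → Prop) (φ ψ : Shift A → ℝ) (C : Set (List I))
    (η : ℝ) : EReal :=
  limsup (fun T : ℝ => ((T⁻¹ : ℝ) : EReal) * elog (partSum A φ ψ C η T)) atTop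


/-- The tail sum `Σ_{ω ∈ C, T < S_ω ψ} exp (S_ω φ - β S_ω ψ)`. -/
noncomputable def tailSum (A : I → I → Prop) (φ ψ : Shift A → ℝ) (C : Set (List I))
    (β T : ℝ) : ℝ≥0∞ :=
  ∑' w : {w : List I // w ∈ C ∧ T < S A ψ w},
    ENNReal.ofReal (Real.exp (S A φ w.1 - β * S A ψ w.1))

/-!
On a band of words with `T - η < S_ω ψ ≤ T` the weights `exp (S_ω φ)` and
`exp (S_ω φ - β S_ω ψ)` differ by the factor `exp (β T)`, up to `exp (± |β| η)`.
A band lies in the tail beyond `T - η`, so a bounded tail sum forces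
`partSum T ≲ exp (β T)`, i.e. pressure `≤ β`. Conversely, if the pressure is below `r < β`,
the tail beyond `T` is covered by the bands ending at `T + (n + 1) η`, whose weighted sums are
dominated by a geometric series of ratio `exp ((r - β) η) < 1`.
-/

lemma elog_le_coe_iff {x : ℝ≥0∞} {u : ℝ} : elog x ≤ u ↔ x ≤ ENNReal.ofReal (Real.exp u) := by
  unfold elog
  split_ifs with h0 htop
  · simp [h0]
  · simp [htop]
  · have hpos : 0 < x.toReal := ENNReal.toReal_pos h0 htop
    rw [EReal.coe_le_coe_iff, Real.log_le_iff_le_exp hpos,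
      ENNReal.le_ofReal_iff_toReal_le htop (Real.exp_nonneg u)]

lemma limsup_inv_mul_elog_le_of_eventually_le {f : ℝ → ℝ≥0∞} {β : ℝ} {M : ℝ≥0∞}
    (hM : M ≠ ⊤) (h : ∀ᶠ T in atTop, f T ≤ ENNReal.ofReal (Real.exp (β * T)) * M) :
    limsup (fun T : ℝ => ((T⁻¹ : ℝ) : EReal) * elog (f T)) atTop ≤ β := by
  set c := M.toReal
  have hMc : M ≤ ENNReal.ofReal (Real.exp c) := by
    rw [← ENNReal.ofReal_toReal hM]
    exact ENNReal.ofReal_le_ofReal (by linarith [Real.add_one_le_exp c])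
  have hbound : ∀ᶠ T in atTop,
      ((T⁻¹ : ℝ) : EReal) * elog (f T) ≤ ((β + c * T⁻¹ : ℝ) : EReal) := by
    filter_upwards [h, eventually_gt_atTop 0] with T hT hT0
    have hlog : elog (f T) ≤ ((β * T + c : ℝ) : EReal) := by
      rw [elog_le_coe_iff, Real.exp_add, ENNReal.ofReal_mul (Real.exp_nonneg _)]
      exact hT.trans (mul_le_mul_right hMc _)
    calc ((T⁻¹ : ℝ) : EReal) * elog (f T) ≤ ((T⁻¹ : ℝ) : EReal) * ((β * T + c : ℝ) : EReal) :=
          mul_le_mul_of_nonneg_left hlog (EReal.coe_nonneg.2 (inv_nonneg.2 hT0.le))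
      _ = ((β + c * T⁻¹ : ℝ) : EReal) := by
          rw [← EReal.coe_mul]
          congr 1
          field_simp
  have hlim : Tendsto (fun T : ℝ => ((β + c * T⁻¹ : ℝ) : EReal)) atTop (𝓝 (β : EReal)) := by
    rw [EReal.tendsto_coe]
    simpa using (tendsto_const_nhds (x := β)).add
      ((tendsto_const_nhds (x := c)).mul tendsto_inv_atTop_zero)
  exact (limsup_le_limsup hbound).trans_eq hlim.limsup_eq

lemma eventually_le_exp_of_limsup_inv_mul_elog_lt {f : ℝ → ℝ≥0∞} {r : ℝ}
    (h : limsup (fun T : ℝ => ((T⁻¹ : ℝ) : EReal) * elog (f T)) atTop < r) :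
    ∀ᶠ T in atTop, f T ≤ ENNReal.ofReal (Real.exp (r * T)) := by
  filter_upwards [eventually_lt_of_limsup_lt h, eventually_gt_atTop 0] with T hT hT0
  have hr : (r : EReal) = ((T⁻¹ : ℝ) : EReal) * ((r * T : ℝ) : EReal) := by
    rw [← EReal.coe_mul]
    congr 1
    field_simp
  rw [hr] at hT
  exact elog_le_coe_iff.1 (lt_of_mul_lt_mul_left hT (EReal.coe_nonneg.2 (by positivity))).le

lemma exists_nat_lt_le_add_one_mul {T s η : ℝ} (hη : 0 < η) (hs : T < s) :
    ∃ n : ℕ, T + n * η < s ∧ s ≤ T + (n + 1) * η := by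
  have hq : 0 < (s - T) / η := div_pos (by linarith) hη
  obtain ⟨n, hn⟩ := Nat.exists_eq_add_one_of_ne_zero (Nat.ceil_pos.2 hq).ne'
  have hlt : (n : ℝ) < (s - T) / η := by
    have := Nat.ceil_lt_add_one hq.le
    rw [hn, Nat.cast_add_one] at this
    linarith
  have hle : (s - T) / η ≤ n + 1 := by
    have := Nat.le_ceil ((s - T) / η)
    rwa [hn, Nat.cast_add_one] at this
  refine ⟨n, ?_, ?_⟩
  · linarith [(lt_div_iff₀ hη).1 hlt]
  · linarith [(div_le_iff₀ hη).1 hle]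

def band (A : I → I → Prop) (ψ : Shift A → ℝ) (C : Set (List I)) (η T : ℝ) : Set (List I) :=
  {w | w ∈ C ∧ T - η < S A ψ w ∧ S A ψ w ≤ T}

section Bands

variable {A : I → I → Prop} {φ ψ : Shift A → ℝ} {C : Set (List I)}

lemma abs_mul_sub_mul_le_of_mem_band {η T : ℝ} {w : List I} (hw : w ∈ band A ψ C η T)
    (β : ℝ) : |β * S A ψ w - β * T| ≤ |β| * η := by
  rw [← mul_sub, abs_mul]
  exact mul_le_mul_of_nonneg_left
    (abs_le.2 ⟨by linarith [hw.2.1], by linarith [hw.2.1, hw.2.2]⟩) (abs_nonneg β)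

lemma partSum_le_mul_tailSum (β η T : ℝ) :
    partSum A φ ψ C η T ≤
      ENNReal.ofReal (Real.exp (β * T + |β| * η)) * tailSum A φ ψ C β (T - η) := by
  have hsub : band A ψ C η T ⊆ {w | w ∈ C ∧ T - η < S A ψ w} := fun w hw => ⟨hw.1, hw.2.1⟩
  calc partSum A φ ψ C η T
      ≤ ∑' w : band A ψ C η T, ENNReal.ofReal (Real.exp (β * T + |β| * η)) *
          ENNReal.ofReal (Real.exp (S A φ w - β * S A ψ w)) := by
        refine ENNReal.tsum_le_tsum fun w => ?_
        rw [← ENNReal.ofReal_mul (Real.exp_nonneg _), ← Real.exp_add]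
        refine ENNReal.ofReal_le_ofReal (Real.exp_le_exp.2 ?_)
        linarith [(abs_le.1 (abs_mul_sub_mul_le_of_mem_band w.2 β)).2]
    _ ≤ _ := by
        rw [ENNReal.tsum_mul_left]
        exact mul_le_mul_right (ENNReal.tsum_mono_subtype
          (fun w => ENNReal.ofReal (Real.exp (S A φ w - β * S A ψ w))) hsub) _

lemma tsum_band_le_mul_partSum (β η T : ℝ) :
    ∑' w : band A ψ C η T, ENNReal.ofReal (Real.exp (S A φ w - β * S A ψ w)) ≤
      ENNReal.ofReal (Real.exp (|β| * η - β * T)) * partSum A φ ψ C η T := by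
  rw [partSum, ← ENNReal.tsum_mul_left]
  refine ENNReal.tsum_le_tsum fun w => ?_
  rw [← ENNReal.ofReal_mul (Real.exp_nonneg _), ← Real.exp_add]
  refine ENNReal.ofReal_le_ofReal (Real.exp_le_exp.2 ?_)
  linarith [(abs_le.1 (abs_mul_sub_mul_le_of_mem_band w.2 β)).1]

lemma tailSum_le_tsum_band {η : ℝ} (hη : 0 < η) (β T : ℝ) :
    tailSum A φ ψ C β T ≤ ∑' n : ℕ, ∑' w : band A ψ C η (T + (n + 1) * η),
      ENNReal.ofReal (Real.exp (S A φ w - β * S A ψ w)) := by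
  have hcover : {w | w ∈ C ∧ T < S A ψ w} ⊆ ⋃ n : ℕ, band A ψ C η (T + (n + 1) * η) := by
    rintro w ⟨hwC, hw⟩
    obtain ⟨n, hlt, hle⟩ := exists_nat_lt_le_add_one_mul hη hw
    exact Set.mem_iUnion.2 ⟨n, hwC, by linarith, hle⟩
  let f w := ENNReal.ofReal (Real.exp (S A φ w - β * S A ψ w))
  exact (ENNReal.tsum_mono_subtype f hcover).trans (ENNReal.tsum_iUnion_le_tsum f _)

lemma tailSum_le_of_partSum_le {η r β T : ℝ} (hη : 0 < η) (hrβ : r < β) (hT : 0 ≤ T)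
    (h : ∀ T' ≥ T, partSum A φ ψ C η T' ≤ ENNReal.ofReal (Real.exp (r * T'))) :
    tailSum A φ ψ C β T ≤ ENNReal.ofReal (Real.exp (|β| * η)) *
      ∑' n : ℕ, ENNReal.ofReal (Real.exp ((r - β) * η)) ^ n := by
  rw [← ENNReal.tsum_mul_left]
  refine (tailSum_le_tsum_band hη β T).trans (ENNReal.tsum_le_tsum fun n => ?_)
  set T' := T + (n + 1) * η
  have hTT' : T ≤ T' := by
    have : 0 ≤ ((n : ℝ) + 1) * η := by positivity
    linarith
  calc _ ≤ ENNReal.ofReal (Real.exp (|β| * η - β * T')) * partSum A φ ψ C η T' :=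
        tsum_band_le_mul_partSum β η T'
    _ ≤ ENNReal.ofReal (Real.exp (|β| * η - β * T')) * ENNReal.ofReal (Real.exp (r * T')) :=
        mul_le_mul_right (h T' hTT') _
    _ ≤ _ := by
        rw [← ENNReal.ofReal_pow (Real.exp_nonneg _), ← Real.exp_nat_mul,
          ← ENNReal.ofReal_mul (Real.exp_nonneg _), ← Real.exp_add,
          ← ENNReal.ofReal_mul (Real.exp_nonneg _), ← Real.exp_add]
        refine ENNReal.ofReal_le_ofReal (Real.exp_le_exp.2 ?_)
        nlinarith

theorem pressure_le_of_limsup_tailSum_lt_top {η β : ℝ}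
    (hβ : limsup (fun T : ℝ => tailSum A φ ψ C β T) atTop < ⊤) :
    pressure A φ ψ C η ≤ β := by
  obtain ⟨M, hM, hMtop⟩ := exists_between hβ
  have hshift : Tendsto (fun T : ℝ => T - η) atTop atTop := by
    simpa [sub_eq_add_neg] using tendsto_atTop_add_const_right atTop (-η) tendsto_id
  refine limsup_inv_mul_elog_le_of_eventually_le
    (ENNReal.mul_ne_top (ENNReal.ofReal_ne_top (r := Real.exp (|β| * η))) hMtop.ne) ?_
  filter_upwards [hshift.eventually (eventually_lt_of_limsup_lt hM)] with T hT
  calc partSum A φ ψ C η T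
      ≤ ENNReal.ofReal (Real.exp (β * T + |β| * η)) * tailSum A φ ψ C β (T - η) :=
        partSum_le_mul_tailSum β η T
    _ ≤ ENNReal.ofReal (Real.exp (β * T)) * (ENNReal.ofReal (Real.exp (|β| * η)) * M) := by
        rw [Real.exp_add, ENNReal.ofReal_mul (Real.exp_nonneg _), mul_assoc]
        exact mul_le_mul_right (mul_le_mul_right hT.le _) _

theorem limsup_tailSum_lt_top_of_pressure_lt {η β : ℝ} (hη : 0 < η)
    (hβ : pressure A φ ψ C η < β) :
    limsup (fun T : ℝ => tailSum A φ ψ C β T) atTop < ⊤ := by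
  obtain ⟨r, hPr, hrβ⟩ := EReal.exists_between_coe_real hβ
  have hrβ : r < β := EReal.coe_lt_coe_iff.1 hrβ
  obtain ⟨T₀, hT₀⟩ := eventually_atTop.1 (eventually_le_exp_of_limsup_inv_mul_elog_lt hPr)
  have hratio : ENNReal.ofReal (Real.exp ((r - β) * η)) < 1 := by
    rw [ENNReal.ofReal_lt_one, Real.exp_lt_one_iff]
    exact mul_neg_of_neg_of_pos (by linarith) hη
  have htail : ∀ᶠ T in atTop, tailSum A φ ψ C β T ≤ ENNReal.ofReal (Real.exp (|β| * η)) *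
      ∑' n : ℕ, ENNReal.ofReal (Real.exp ((r - β) * η)) ^ n := by
    filter_upwards [eventually_ge_atTop (max T₀ 0)] with T hT
    exact tailSum_le_of_partSum_le hη hrβ (le_of_max_le_right hT)
      fun T' hT' => hT₀ T' ((le_max_left _ _).trans (hT.trans hT'))
  refine (limsup_le_of_le (h := htail)).trans_lt (ENNReal.mul_lt_top ENNReal.ofReal_lt_top ?_)
  rw [ENNReal.tsum_geometric, ENNReal.inv_lt_top]
  exact tsub_pos_of_lt hratio

end Bands

theorem pressure_eq_criticalExponent_general (A : I → I → Prop) (φ ψ : Shift A → ℝ)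
    (C : Set (List I)) (η : ℝ) (hη : 0 < η) :
    pressure A φ ψ C η =
      ⨅ β : {β : ℝ // limsup (fun T : ℝ => tailSum A φ ψ C β T) atTop < ⊤},
        ((β : ℝ) : EReal) := by
  refine le_antisymm (le_iInf fun β => pressure_le_of_limsup_tailSum_lt_top β.2) ?_
  refine EReal.le_of_forall_lt_iff_le.1 fun β hβ => ?_
  exact iInf_le_of_le ⟨β, limsup_tailSum_lt_top_of_pressure_lt hη hβ⟩ le_rfl

/-- **Critical exponent.** For `ψ ≥ 0` and any `η > 0`, the `ψ`-induced pressure of `φ`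
with respect to `C` equals the infimum of all real `β` such that
`limsup_{T → ∞} Σ_{ω ∈ C, T < S_ω ψ} exp (S_ω φ - β S_ω ψ) < ∞`; in particular it is
independent of the choice of `η > 0`. -/
theorem pressure_eq_criticalExponent (A : I → I → Prop) (φ ψ : Shift A → ℝ)
    (hψ : ∀ x, 0 ≤ ψ x) (C : Set (List I)) (η : ℝ) (hη : 0 < η) :
    pressure A φ ψ C η =
      ⨅ β : {β : ℝ // limsup (fun T : ℝ => tailSum A φ ψ C β T) atTop < ⊤},
        ((β : ℝ) : EReal) :=
  pressure_eq_criticalExponent_general A φ ψ C η hη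
end

section
/- Subhomogeneity: if P_ψ(φ, C) ∈ ℝ then P_ψ(cφ, C) ≤ c·P_ψ(φ, C) for all c ≥ 1, and P_ψ(cφ, C) ≥ c·P_ψ(φ, C) for all 0 ≤ c ≤ 1. -/
open Filter Topology
open scoped ENNReal

variable {I : Type*}

/-!
Since `S_ω (cφ) = c S_ω φ` for `c ≥ 0`, the partition function of `cφ` is `Σ aᵢ ^ c`, where
`Σ aᵢ` is the partition function of `φ`. The map `x ↦ x ^ c` is superadditive for `c ≥ 1` and
subadditive for `0 < c ≤ 1`, so `Σ aᵢ ^ c` lies below (resp. above) `(Σ aᵢ) ^ c`; taking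
`(1/T) log` and the `limsup` gives the two inequalities. For `c = 0` the partition function of
`0 · φ` counts words, which is at least `1` whenever that of `φ` is nonzero, and since the
pressure of `φ` is not `-∞` this happens for arbitrarily large `T`.
-/

namespace ENNReal

variable {ι : Type*} {p : ℝ}

theorem sum_rpow_le_rpow_sum (s : Finset ι) (f : ι → ℝ≥0∞) (hp : 1 ≤ p) :
    ∑ i ∈ s, f i ^ p ≤ (∑ i ∈ s, f i) ^ p := by
  classical
  induction s using Finset.induction_on with
  | empty => simp [zero_rpow_of_pos (zero_lt_one.trans_le hp)]
  | insert i s hi ih =>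
    rw [Finset.sum_insert hi, Finset.sum_insert hi]
    exact (add_le_add_right ih _).trans (add_rpow_le_rpow_add _ _ hp)

theorem rpow_sum_le_sum_rpow (s : Finset ι) (f : ι → ℝ≥0∞) (hp₀ : 0 < p) (hp₁ : p ≤ 1) :
    (∑ i ∈ s, f i) ^ p ≤ ∑ i ∈ s, f i ^ p :=
  Finset.le_sum_of_subadditive (· ^ p) (by simp [hp₀])
    (fun x y => rpow_add_le_add_rpow x y hp₀.le hp₁) s f

theorem tsum_rpow_le_rpow_tsum (f : ι → ℝ≥0∞) (hp : 1 ≤ p) :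
    ∑' i, f i ^ p ≤ (∑' i, f i) ^ p :=
  calc ∑' i, f i ^ p = ⨆ s : Finset ι, ∑ i ∈ s, f i ^ p := ENNReal.tsum_eq_iSup_sum
    _ ≤ ⨆ s : Finset ι, (∑ i ∈ s, f i) ^ p := iSup_mono fun s => sum_rpow_le_rpow_sum s f hp
    _ = (∑' i, f i) ^ p := by
      rw [ENNReal.tsum_eq_iSup_sum]
      exact ((orderIsoRpow p (zero_lt_one.trans_le hp)).map_iSup _).symm

theorem rpow_tsum_le_tsum_rpow (f : ι → ℝ≥0∞) (hp₀ : 0 < p) (hp₁ : p ≤ 1) :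
    (∑' i, f i) ^ p ≤ ∑' i, f i ^ p :=
  calc (∑' i, f i) ^ p = ⨆ s : Finset ι, (∑ i ∈ s, f i) ^ p := by
        rw [ENNReal.tsum_eq_iSup_sum]
        exact (orderIsoRpow p hp₀).map_iSup _
    _ ≤ ⨆ s : Finset ι, ∑ i ∈ s, f i ^ p := iSup_mono fun s => rpow_sum_le_sum_rpow s f hp₀ hp₁
    _ = ∑' i, f i ^ p := ENNReal.tsum_eq_iSup_sum.symm

end ENNReal

theorem elog_eq_log : elog = ENNReal.log :=
  rfl

theorem limsup_inv_mul_mono {u v : ℝ → EReal} (h : u ≤ v) :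
    limsup (fun T : ℝ => ((T⁻¹ : ℝ) : EReal) * u T) atTop
      ≤ limsup (fun T : ℝ => ((T⁻¹ : ℝ) : EReal) * v T) atTop := by
  refine limsup_le_limsup ?_
  filter_upwards [eventually_ge_atTop 0] with T hT
  exact mul_le_mul_of_nonneg_left (h T) (EReal.coe_nonneg.2 (inv_nonneg.2 hT))

theorem limsup_inv_mul_const_mul (u : ℝ → EReal) {c : ℝ} (hc : 0 ≤ c) :
    limsup (fun T : ℝ => ((T⁻¹ : ℝ) : EReal) * ((c : EReal) * u T)) atTop
      = c * limsup (fun T : ℝ => ((T⁻¹ : ℝ) : EReal) * u T) atTop := by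
  simp_rw [mul_left_comm _ (c : EReal)]
  exact EReal.limsup_const_mul_of_nonneg_of_ne_top (EReal.coe_nonneg.2 hc) (EReal.coe_ne_top c)

section Pressure

variable {A : I → I → Prop} {φ ψ : Shift A → ℝ} {C : Set (List I)} {η T c : ℝ}

open Pointwise in
theorem S_const_mul (w : List I) (hc : 0 ≤ c) :
    S A (fun x => c * φ x) w = c * S A φ w := by
  have hb : birkhoff A (fun x => c * φ x) w.length = fun x => c • birkhoff A φ w.length x := by
    funext x
    simp [birkhoff, Finset.mul_sum]
  rw [S, S, hb, ← smul_eq_mul, ← Real.sSup_smul_of_nonneg hc, ← Set.image_smul, Set.image_image]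

theorem partSum_const_mul (hc : 0 ≤ c) :
    partSum A (fun x => c * φ x) ψ C η T
      = ∑' w : {w : List I // w ∈ C ∧ T - η < S A ψ w ∧ S A ψ w ≤ T},
          ENNReal.ofReal (Real.exp (S A φ w.1)) ^ c := by
  refine tsum_congr fun w => ?_
  rw [S_const_mul w.1 hc, mul_comm, Real.exp_mul,
    ENNReal.ofReal_rpow_of_pos (Real.exp_pos _)]

theorem partSum_const_mul_le (hc : 1 ≤ c) :
    partSum A (fun x => c * φ x) ψ C η T ≤ partSum A φ ψ C η T ^ c := by
  rw [partSum_const_mul (zero_le_one.trans hc)]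
  exact ENNReal.tsum_rpow_le_rpow_tsum _ hc

theorem rpow_partSum_le (hc₀ : 0 < c) (hc₁ : c ≤ 1) :
    partSum A φ ψ C η T ^ c ≤ partSum A (fun x => c * φ x) ψ C η T := by
  rw [partSum_const_mul hc₀.le]
  exact ENNReal.rpow_tsum_le_tsum_rpow _ hc₀ hc₁

theorem one_le_partSum_zero_mul (h : partSum A φ ψ C η T ≠ 0) :
    1 ≤ partSum A (fun x => 0 * φ x) ψ C η T := by
  obtain ⟨w, -⟩ := not_forall.1 (mt ENNReal.tsum_eq_zero.2 h)
  rw [partSum_const_mul le_rfl]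
  calc 1 = ENNReal.ofReal (Real.exp (S A φ w.1)) ^ (0 : ℝ) := ENNReal.rpow_zero.symm
    _ ≤ _ := ENNReal.le_tsum w

theorem frequently_partSum_ne_zero (h : pressure A φ ψ C η ≠ ⊥) :
    ∃ᶠ T in atTop, 0 < T ∧ partSum A φ ψ C η T ≠ 0 := by
  refine fun hzero => h ?_
  have hbot : ∀ᶠ T in atTop,
      ((T⁻¹ : ℝ) : EReal) * elog (partSum A φ ψ C η T) = ⊥ := by
    filter_upwards [hzero, eventually_gt_atTop 0] with T hT hT₀
    rw [not_and_not_right.1 hT hT₀, elog_eq_log, ENNReal.log_zero]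
    exact EReal.mul_bot_of_pos (EReal.coe_pos.2 (inv_pos.2 hT₀))
  rw [pressure, limsup_congr hbot, limsup_const]

theorem pressure_const_mul_le (hc : 1 ≤ c) :
    pressure A (fun x => c * φ x) ψ C η ≤ c * pressure A φ ψ C η := by
  rw [pressure, pressure, ← limsup_inv_mul_const_mul _ (zero_le_one.trans hc)]
  refine limsup_inv_mul_mono fun T => ?_
  rw [elog_eq_log, ← ENNReal.log_rpow]
  exact ENNReal.log_monotone (partSum_const_mul_le hc)

theorem const_mul_pressure_le (hc₀ : 0 < c) (hc₁ : c ≤ 1) :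
    c * pressure A φ ψ C η ≤ pressure A (fun x => c * φ x) ψ C η := by
  rw [pressure, pressure, ← limsup_inv_mul_const_mul _ hc₀.le]
  refine limsup_inv_mul_mono fun T => ?_
  rw [elog_eq_log, ← ENNReal.log_rpow]
  exact ENNReal.log_monotone (rpow_partSum_le hc₀ hc₁)

theorem zero_le_pressure_zero_mul (h : pressure A φ ψ C η ≠ ⊥) :
    0 ≤ pressure A (fun x => 0 * φ x) ψ C η := by
  refine le_limsup_of_frequently_le ((frequently_partSum_ne_zero h).mono ?_)
  rintro T ⟨hT, hne⟩
  have hlog : 0 ≤ elog (partSum A (fun x => 0 * φ x) ψ C η T) := by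
    rw [elog_eq_log, ← ENNReal.log_one]
    exact ENNReal.log_monotone (one_le_partSum_zero_mul hne)
  exact mul_nonneg (EReal.coe_nonneg.2 (inv_nonneg.2 hT.le)) hlog

end Pressure

theorem pressure_subhomogeneous_general (A : I → I → Prop) (φ ψ : Shift A → ℝ)
    (C : Set (List I)) (η : ℝ)
    (hfin : ∃ r : ℝ, pressure A φ ψ C η = (r : EReal)) :
    (∀ c : ℝ, 1 ≤ c →
      pressure A (fun x => c * φ x) ψ C η ≤ (c : EReal) * pressure A φ ψ C η) ∧
    (∀ c : ℝ, 0 ≤ c → c ≤ 1 →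
      (c : EReal) * pressure A φ ψ C η ≤ pressure A (fun x => c * φ x) ψ C η) := by
  obtain ⟨r, hr⟩ := hfin
  refine ⟨fun c hc => pressure_const_mul_le hc, fun c hc₀ hc₁ => ?_⟩
  rcases hc₀.eq_or_lt with rfl | hc₀
  · rw [EReal.coe_zero, zero_mul]
    exact zero_le_pressure_zero_mul (hr ▸ EReal.coe_ne_bot r)
  · exact const_mul_pressure_le hc₀ hc₁

/-- **Subhomogeneity**: if `P_ψ(φ, C)` is finite then `P_ψ(cφ, C) ≤ c P_ψ(φ, C)` for
`c ≥ 1` and `P_ψ(cφ, C) ≥ c P_ψ(φ, C)` for `0 ≤ c ≤ 1`. -/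
theorem pressure_subhomogeneous (A : I → I → Prop) (φ ψ : Shift A → ℝ)
    (hψ : ∀ x, 0 ≤ ψ x) (C : Set (List I)) (η : ℝ) (hη : 0 < η)
    (hfin : ∃ r : ℝ, pressure A φ ψ C η = (r : EReal)) :
    (∀ c : ℝ, 1 ≤ c →
      pressure A (fun x => c * φ x) ψ C η ≤ (c : EReal) * pressure A φ ψ C η) ∧
    (∀ c : ℝ, 0 ≤ c → c ≤ 1 →
      (c : EReal) * pressure A φ ψ C η ≤ pressure A (fun x => c * φ x) ψ C η) :=
  pressure_subhomogeneous_general A φ ψ C η hfin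
end

section
/- For the renewal shift with potential ψ given by ψ|[n] = log((n+1)/(n−1)) for n ≥ 2 and ψ|[1] = log 2: for every T > 0 and every β ∈ ℝ, the sum Σ_{ω ∈ Σ*, T < S_ω ψ} e^{−β S_ω ψ} diverges; consequently P_ψ(0, Σ*) = +∞, while P_ψ(0, Σ₁^{per}) = 1. -/
open Filter Topology
open scoped ENNReal

variable {I : Type*}

/-- The renewal shift on `ℕ` rooted at `1`: transitions `n → n - 1` for `n ≥ 2` and
`1 → n` for every `n ≥ 1`. -/
def Aren : ℕ → ℕ → Prop := fun a b => (a = 1 ∧ 1 ≤ b) ∨ (2 ≤ a ∧ b = a - 1)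

/-- The potential `ψ` with `ψ|[1] = log 2` and `ψ|[n] = log ((n+1)/(n-1))` for `n ≥ 2`. -/
noncomputable def psiRen : Shift Aren → ℝ := fun x =>
  if x.1 0 = 1 then Real.log 2
  else Real.log (((x.1 0 : ℝ) + 1) / ((x.1 0 : ℝ) - 1))

/-- The set `Σ_a^per` of periodic words starting with the symbol `a`. -/
def PerWords (A : ℕ → ℕ → Prop) (a : ℕ) : Set (List ℕ) :=
  {w | w ∈ Words A ∧ (∀ (h : w ≠ []), w.head h = a) ∧
    ∀ (h : w ≠ []), A (w.getLast h) (w.head h)}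

/-!
Because `ψ` depends only on the first letter and every admissible word ending in a nonzero
letter extends to a point of its cylinder, `S_ω ψ` is the sum of `ψ` over the letters of `ω`.
With `ψ(n + 1) = L(n + 1) - L(n)` for `L(n) = log (n (n + 1))`, the weight of a descending run
telescopes. Runs descending to a letter `m` have unbounded weights and increments at most
`2/(m - 1)`, so for large `m` every window `(T - η, T]` with `η ≤ T` contains the weight of such a
run: this gives the divergence and `P_ψ(0, Σ*) = ∞`.

A periodic word at `1` factors uniquely into blocks `[1, k + 1, k, …, 2]` of weight `L(k + 1)`,
so `Σ_{ω ∈ Σ₁^per} e^{-s S_ω ψ} = Σ_{n ≥ 1} G(s)^n` with `G(s) = Σ_k ((k + 1)(k + 2))^{-s}`.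
Since `G(1) = 1` by telescoping, this series converges for `s > 1` and all its tails diverge for
`s ≤ 1`; the induced pressure is the critical exponent of such a series.
-/
section Growth

open Real

variable {α : Type*}

lemma inv_mul_elog_le_iff {x : ℝ≥0∞} {T y : ℝ} (hT : 0 < T) :
    ((T⁻¹ : ℝ) : EReal) * elog x ≤ y ↔ x ≤ ENNReal.ofReal (exp (T * y)) := by
  have hT' : (0 : EReal) < ((T⁻¹ : ℝ) : EReal) := by exact_mod_cast inv_pos.2 hT
  rcases eq_or_ne x 0 with rfl | h0
  · simp [elog, EReal.mul_bot_of_pos hT']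
  rcases eq_or_ne x ⊤ with rfl | htop
  · simp [elog, EReal.mul_top_of_pos hT']
  have hpos : 0 < x.toReal := ENNReal.toReal_pos h0 htop
  rw [elog, if_neg h0, if_neg htop, ← EReal.coe_mul, EReal.coe_le_coe_iff, inv_mul_le_iff₀ hT,
    log_le_iff_le_exp hpos, ENNReal.le_ofReal_iff_toReal_le htop (exp_pos _).le]

noncomputable def growthExponent (N : ℝ → ℝ≥0∞) : EReal :=
  limsup (fun T : ℝ => ((T⁻¹ : ℝ) : EReal) * elog (N T)) atTop

lemma growthExponent_le {N : ℝ → ℝ≥0∞} {K : ℝ≥0∞} {s : ℝ} (hK : K ≠ ⊤)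
    (h : ∀ᶠ T in atTop, N T ≤ K * ENNReal.ofReal (exp (s * T))) : growthExponent N ≤ s := by
  obtain ⟨a, hKa⟩ : ∃ a, K ≤ ENNReal.ofReal (exp a) :=
    ⟨log (K.toReal + 1), by
      rw [exp_log (by positivity)]
      exact (ENNReal.le_ofReal_iff_toReal_le hK (by positivity)).2 (by linarith)⟩
  have hlim : Tendsto (fun T : ℝ => ((s + a / T : ℝ) : EReal)) atTop (𝓝 s) := by
    rw [EReal.tendsto_coe]
    simpa using tendsto_const_nhds.add ((tendsto_const_nhds (x := a)).div_atTop tendsto_id)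
  refine (limsup_le_limsup ?_).trans hlim.limsup_eq.le
  filter_upwards [h, eventually_gt_atTop 0] with T hT hT0
  rw [inv_mul_elog_le_iff hT0]
  refine hT.trans ((mul_le_mul_left hKa _).trans_eq ?_)
  rw [← ENNReal.ofReal_mul (exp_pos _).le, ← exp_add]
  congr 2
  field_simp
  ring

lemma eventually_le_of_growthExponent_lt {N : ℝ → ℝ≥0∞} {c : ℝ} (h : growthExponent N < c) :
    ∀ᶠ T in atTop, N T ≤ ENNReal.ofReal (exp (c * T)) := by
  filter_upwards [eventually_lt_of_limsup_lt h, eventually_gt_atTop 0] with T hT hT0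
  rw [mul_comm]
  exact (inv_mul_elog_le_iff hT0).1 hT.le

lemma growthExponent_eq_top {N : ℝ → ℝ≥0∞} (h : ∀ᶠ T in atTop, N T = ⊤) :
    growthExponent N = ⊤ := by
  have h' : ∀ᶠ T in atTop, ((T⁻¹ : ℝ) : EReal) * elog (N T) = ⊤ := by
    filter_upwards [h, eventually_gt_atTop 0] with T hT hT0
    rw [hT, elog, if_neg ENNReal.top_ne_zero, if_pos rfl]
    exact EReal.mul_top_of_pos (by exact_mod_cast inv_pos.2 hT0)
  rw [growthExponent, limsup_congr h', limsup_const]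

noncomputable def windowCount (C : Set α) (x : α → ℝ) (η T : ℝ) : ℝ≥0∞ :=
  ∑' _ : {a // a ∈ C ∧ T - η < x a ∧ x a ≤ T}, 1

lemma windowCount_le {C : Set α} {x : α → ℝ} {η T s : ℝ} (hs : 0 ≤ s) :
    windowCount C x η T ≤
      ENNReal.ofReal (exp (s * T)) * ∑' a : C, ENNReal.ofReal (exp (-s * x a)) := by
  set e := fun a => ENNReal.ofReal (exp (s * T)) * ENNReal.ofReal (exp (-s * x a))
  rw [← ENNReal.tsum_mul_left]
  calc windowCount C x η T ≤ ∑' a : {a // a ∈ C ∧ T - η < x a ∧ x a ≤ T}, e a := by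
        refine ENNReal.tsum_le_tsum fun a => ?_
        dsimp only [e]
        rw [← ENNReal.ofReal_mul (exp_pos _).le, ← exp_add, ← ENNReal.ofReal_one]
        exact ENNReal.ofReal_le_ofReal (one_le_exp (by nlinarith [a.2.2.2]))
    _ ≤ ∑' a : C, e a :=
        ENNReal.tsum_mono_subtype e (s := {a | a ∈ C ∧ T - η < x a ∧ x a ≤ T}) fun _ ha => ha.1

lemma growthExponent_windowCount_le {C : Set α} {x : α → ℝ} {η s : ℝ} (hs : 0 ≤ s)
    (h : ∑' a : C, ENNReal.ofReal (exp (-s * x a)) ≠ ⊤) :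
    growthExponent (windowCount C x η) ≤ s :=
  growthExponent_le h (Eventually.of_forall fun _ => (windowCount_le hs).trans_eq (mul_comm _ _))

lemma mem_Ioc_ceil_div_mul {y η : ℝ} (hη : 0 < η) (hy : 0 ≤ y) :
    y ∈ Set.Ioc ((⌈y / η⌉₊ : ℝ) * η - η) ((⌈y / η⌉₊ : ℝ) * η) := by
  constructor
  · have := Nat.ceil_lt_add_one (div_nonneg hy hη.le)
    have := (lt_div_iff₀ hη).1 (by linarith : (⌈y / η⌉₊ : ℝ) - 1 < y / η)
    linarith
  · exact (div_le_iff₀ hη).1 (Nat.le_ceil _)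

lemma exists_mem_Ioc_of_step_lt {a : ℕ → ℝ} {T η : ℝ} {n : ℕ} (h0 : a 0 ≤ T) (hn : T < a n)
    (hstep : ∀ k, a (k + 1) < a k + η) : ∃ k < n, a k ∈ Set.Ioc (T - η) T := by
  induction n with
  | zero => exact absurd h0 hn.not_ge
  | succ n ih =>
    by_cases h : T < a n
    · obtain ⟨k, hk, hka⟩ := ih h
      exact ⟨k, by omega, hka⟩
    · exact ⟨n, by omega, by linarith [hstep n], not_lt.1 h⟩

lemma tsum_window_le {C : Set α} {x : α → ℝ} {η T s : ℝ} (hs : 0 ≤ s) :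
    ∑' a : {a // a ∈ C ∧ T - η < x a ∧ x a ≤ T}, ENNReal.ofReal (exp (-s * x a)) ≤
      ENNReal.ofReal (exp (-s * (T - η))) * windowCount C x η T := by
  rw [windowCount, ← ENNReal.tsum_mul_left]
  refine ENNReal.tsum_le_tsum fun a => ?_
  rw [mul_one]
  exact ENNReal.ofReal_le_ofReal (exp_le_exp.2 (by nlinarith [a.2.2.1]))

lemma tsum_tail_lt_top {C : Set α} {x : α → ℝ} {η s c T₀ : ℝ} (hη : 0 < η) (hs : 0 ≤ s)
    (hcs : c < s) (hN : ∀ T, T₀ ≤ T → windowCount C x η T ≤ ENNReal.ofReal (exp (c * T))) :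
    ∑' a : {a // a ∈ C ∧ T₀ < x a}, ENNReal.ofReal (exp (-s * x a)) < ⊤ := by
  -- Sort the tail into the windows `(T₀ + (n - 1) η, T₀ + n η]`; their contributions are
  -- bounded by `e^{-s (T₀ + (n - 1) η)} e^{c (T₀ + n η)}`, a geometric sequence.
  set level : {a // a ∈ C ∧ T₀ < x a} → ℕ := fun a => ⌈(x a - T₀) / η⌉₊
  set window : ℕ → Set α := fun n => {a | a ∈ C ∧ T₀ + n * η - η < x a ∧ x a ≤ T₀ + n * η}
  have hlevel (n : ℕ) (a : level ⁻¹' {n}) : a.1.1 ∈ window n := by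
    have := mem_Ioc_ceil_div_mul hη (sub_nonneg.2 a.1.2.2.le)
    rw [show ⌈(x a.1.1 - T₀) / η⌉₊ = n from a.2] at this
    exact ⟨a.1.2.1, by linarith [this.1], by linarith [this.2]⟩
  set r := ENNReal.ofReal (exp ((c - s) * η))
  have hr : r < 1 := by
    rw [← ENNReal.ofReal_one, ENNReal.ofReal_lt_ofReal_iff one_pos]
    exact Real.exp_lt_one_iff.2 (mul_neg_of_neg_of_pos (by linarith) hη)
  have hwindow (n : ℕ) : ∑' a : window n, ENNReal.ofReal (exp (-s * x a)) ≤
      ENNReal.ofReal (exp (s * η + (c - s) * T₀)) * r ^ n := by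
    refine (tsum_window_le hs).trans ((mul_le_mul_right (hN _ (le_add_of_nonneg_right
      (by positivity))) _).trans_eq ?_)
    rw [← ENNReal.ofReal_pow (exp_pos _).le, ← exp_nat_mul, ← ENNReal.ofReal_mul (exp_pos _).le,
      ← ENNReal.ofReal_mul (exp_pos _).le, ← exp_add, ← exp_add]
    ring_nf
  calc ∑' a : {a // a ∈ C ∧ T₀ < x a}, ENNReal.ofReal (exp (-s * x a))
      = ∑' n, ∑' a : level ⁻¹' {n}, ENNReal.ofReal (exp (-s * x a.1.1)) :=
        (ENNReal.tsum_fiberwise _ level).symm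
    _ ≤ ∑' n, ∑' a : window n, ENNReal.ofReal (exp (-s * x a)) :=
        ENNReal.tsum_le_tsum fun n => ENNReal.tsum_comp_le_tsum_of_injective
          (f := fun a : level ⁻¹' {n} => (⟨a.1.1, hlevel n a⟩ : window n))
          (fun a b h => Subtype.ext (Subtype.ext (congrArg (fun c : window n => c.1) h)))
          fun a => ENNReal.ofReal (exp (-s * x a))
    _ ≤ ∑' n, ENNReal.ofReal (exp (s * η + (c - s) * T₀)) * r ^ n := ENNReal.tsum_le_tsum hwindow
    _ < ⊤ := by
        rw [ENNReal.tsum_mul_left, ENNReal.tsum_geometric]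
        exact ENNReal.mul_lt_top ENNReal.ofReal_lt_top (ENNReal.inv_lt_top.2 (tsub_pos_of_lt hr))

lemma le_growthExponent_windowCount {C : Set α} {x : α → ℝ} {η s : ℝ} (hη : 0 < η) (hs : 0 ≤ s)
    (h : ∀ T₀, ∑' a : {a // a ∈ C ∧ T₀ < x a}, ENNReal.ofReal (exp (-s * x a)) = ⊤) :
    (s : EReal) ≤ growthExponent (windowCount C x η) := by
  by_contra! hlt
  obtain ⟨c, hc, hcs⟩ := EReal.exists_between_coe_real hlt
  obtain ⟨T₀, hT₀⟩ := eventually_atTop.1 (eventually_le_of_growthExponent_lt hc)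
  exact (tsum_tail_lt_top hη hs (by exact_mod_cast hcs) hT₀).ne (h T₀)

lemma tsum_eq_top_of_infinite {s t : Set α} {f : α → ℝ≥0∞} {c : ℝ≥0∞} (hs : s.Infinite)
    (hst : s ⊆ t) (hc : c ≠ 0) (hf : ∀ a ∈ s, c ≤ f a) : ∑' a : t, f a = ⊤ := by
  have := hs.to_subtype
  refine top_unique ?_
  calc ⊤ = ∑' _ : s, c := (ENNReal.tsum_const_eq_top_of_ne_zero hc).symm
    _ ≤ ∑' a : s, f a := ENNReal.tsum_le_tsum fun a => hf a a.2
    _ ≤ ∑' a : t, f a := ENNReal.tsum_mono_subtype f hst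

end Growth

section ListSums

open Real

variable {α : Type*}

def listConsEquiv (α : Type*) (n : ℕ) :
    α × {l : List α // l.length = n} ≃ {l : List α // l.length = n + 1} where
  toFun p := ⟨p.1 :: p.2.1, by simp [p.2.2]⟩
  invFun l := (l.1.head (List.ne_nil_of_length_eq_add_one l.2), ⟨l.1.tail, by simp [l.2]⟩)
  left_inv _ := rfl
  right_inv l := Subtype.ext (List.cons_head_tail _)

lemma tsum_prod_map_of_length_eq (g : α → ℝ≥0∞) (n : ℕ) :
    ∑' l : {l : List α // l.length = n}, (l.1.map g).prod = (∑' a, g a) ^ n := by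
  induction n with
  | zero =>
    rw [pow_zero, tsum_eq_single (⟨[], rfl⟩ : {l : List α // l.length = 0})
      fun l hl => absurd (Subtype.ext (List.eq_nil_of_length_eq_zero l.2)) hl]
    rfl
  | succ n ih =>
    rw [← (listConsEquiv α n).tsum_eq, ENNReal.tsum_prod', pow_succ', ← ih,
      ← ENNReal.tsum_mul_right]
    refine tsum_congr fun a => ?_
    rw [← ENNReal.tsum_mul_left]
    rfl

lemma tsum_prod_map (g : α → ℝ≥0∞) : ∑' l : List α, (l.map g).prod = ∑' n : ℕ, (∑' a, g a) ^ n := by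
  rw [← ENNReal.tsum_fiberwise _ List.length]
  exact tsum_congr fun n => tsum_prod_map_of_length_eq g n

lemma ofReal_exp_neg_mul_sum (s : ℝ) (f : α → ℝ) (l : List α) :
    ENNReal.ofReal (exp (-s * (l.map f).sum)) =
      (l.map fun a => ENNReal.ofReal (exp (-s * f a))).prod := by
  induction l with
  | nil => simp
  | cons a l ih =>
    rw [List.map_cons, List.sum_cons, mul_add, exp_add, ENNReal.ofReal_mul (exp_pos _).le, ih]
    rfl

end ListSums

section Shift

variable {A : I → I → Prop}

lemma mem_words_iff {w : List I} : w ∈ Words A ↔ w ≠ [] ∧ w.IsChain A := by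
  simp [Words, List.isChain_iff_getElem]

lemma iterate_shiftMap_apply (x : Shift A) (k n : ℕ) :
    ((shiftMap A)^[k] x).1 n = x.1 (n + k) := by
  induction k generalizing x with
  | zero => rfl
  | succ k ih => rw [Function.iterate_succ_apply, ih]; rfl

lemma birkhoff_eq_sum_of_mem_cylinder {f : Shift A → ℝ} {g : I → ℝ} (hf : ∀ x, f x = g (x.1 0))
    {w : List I} {x : Shift A} (hx : x ∈ cylinder A w) :
    birkhoff A f w.length x = (w.map g).sum := by
  simp only [birkhoff, hf, iterate_shiftMap_apply, zero_add, Finset.sum_range]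
  rw [← List.sum_ofFn]
  congr 1
  refine List.ext_getElem (by simp) fun i hi _ => ?_
  simp only [List.getElem_ofFn, List.getElem_map]
  exact congrArg g (hx i (by simpa using hi))

lemma S_eq_sum_of_cylinder_nonempty {f : Shift A → ℝ} {g : I → ℝ} (hf : ∀ x, f x = g (x.1 0))
    {w : List I} (hw : (cylinder A w).Nonempty) : S A f w = (w.map g).sum := by
  rw [S, Set.image_congr fun x hx => birkhoff_eq_sum_of_mem_cylinder hf hx, hw.image_const,
    csSup_singleton]

lemma S_const_zero (w : List I) : S A (fun _ => 0) w = 0 := by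
  have hzero : ∀ y ∈ birkhoff A (fun _ => 0) w.length '' cylinder A w, y = 0 := by
    rintro _ ⟨x, -, rfl⟩
    simp [birkhoff]
  exact le_antisymm (Real.sSup_nonpos fun y hy => (hzero y hy).le)
    (Real.sSup_nonneg fun y hy => (hzero y hy).ge)

lemma cylinder_nonempty {w : List I} (x : Shift A) (hw : (w ++ [x.1 0]).IsChain A) :
    (cylinder A w).Nonempty := by
  let y : ℕ → I := fun i => if h : i < w.length then w[i] else x.1 (i - w.length)
  have hy : ∀ i (hi : i < w.length + 1), y i = (w ++ [x.1 0])[i]'(by simpa using hi) := by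
    intro i hi
    simp only [y, List.getElem_append]
    split_ifs with h
    · rfl
    · simp [show i = w.length by omega]
  refine ⟨⟨y, fun i => ?_⟩, fun i hi => by simp [y, hi]⟩
  by_cases hi : i < w.length
  · rw [hy i (by omega), hy (i + 1) (by omega)]
    exact List.isChain_iff_getElem.1 hw i (by simpa using hi)
  · simp only [y, dif_neg hi, dif_neg (show ¬ i + 1 < w.length by omega),
      show i + 1 - w.length = i - w.length + 1 by omega]
    exact x.2 _

lemma partSum_const_zero (ψ : Shift A → ℝ) (C : Set (List I)) (η T : ℝ) :
    partSum A (fun _ => 0) ψ C η T = windowCount C (S A ψ) η T := by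
  simp [partSum, windowCount, S_const_zero]

lemma pressure_const_zero (ψ : Shift A → ℝ) (C : Set (List I)) (η : ℝ) :
    pressure A (fun _ => 0) ψ C η = growthExponent (windowCount C (S A ψ) η) := by
  simp only [pressure, growthExponent, partSum_const_zero]

end Shift

lemma mem_perWords_iff {A : ℕ → ℕ → Prop} {a : ℕ} {w : List ℕ} :
    w ∈ PerWords A a ↔ w.head? = some a ∧ (w ++ [a]).IsChain A := by
  rcases w with _ | ⟨b, w⟩
  · simp [PerWords, Words]
  · simp only [PerWords, mem_words_iff, Set.mem_ofPred_eq, List.head?_cons, Option.some.injEq,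
      List.isChain_append, List.getLast?_eq_some_getLast (List.cons_ne_nil b w)]
    grind [List.isChain_singleton]

namespace Renewal

open Real

noncomputable def psi (n : ℕ) : ℝ :=
  if n = 1 then log 2 else log ((n + 1) / (n - 1))

lemma psiRen_apply (x : Shift Aren) : psiRen x = psi (x.1 0) := rfl

noncomputable def pronicLog (n : ℕ) : ℝ := log (n * (n + 1))

lemma pronicLog_nonneg (n : ℕ) : 0 ≤ pronicLog n := by
  rcases Nat.eq_zero_or_pos n with rfl | hn
  · simp [pronicLog]
  · have : (1 : ℝ) ≤ n := by exact_mod_cast hn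
    exact log_nonneg (by nlinarith)

lemma tendsto_pronicLog_atTop : Tendsto pronicLog atTop atTop := by
  refine tendsto_atTop_mono' _ ?_ (tendsto_log_atTop.comp tendsto_natCast_atTop_atTop)
  filter_upwards [eventually_gt_atTop 0] with n hn
  have : (1 : ℝ) ≤ n := by exact_mod_cast hn
  exact log_le_log (by positivity) (by nlinarith)

lemma psi_add_two (n : ℕ) : psi (n + 2) = log ((n + 3) / (n + 1)) := by
  rw [psi, if_neg (by omega)]
  push_cast
  ring_nf

lemma psi_succ (n : ℕ) : psi (n + 1) = pronicLog (n + 1) - pronicLog n := by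
  rcases n with _ | n
  · norm_num [psi, pronicLog]
  rw [psi_add_two, pronicLog, pronicLog, ← log_div (by positivity) (by positivity)]
  congr 1
  push_cast
  field_simp
  ring

lemma psi_add_two_le (n : ℕ) : psi (n + 2) ≤ 2 / (n + 1) := by
  rw [psi_add_two]
  refine (log_le_sub_one_of_pos (by positivity)).trans_eq ?_
  field_simp
  ring

def descentPoint (a : ℕ) : Shift Aren :=
  ⟨fun i => max 1 (a - i), fun i => by simp only [Aren]; omega⟩

lemma S_eq_sum_psi {w : List ℕ} {b : ℕ} (hb : 1 ≤ b) (hw : (w ++ [b]).IsChain Aren) :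
    S Aren psiRen w = (w.map psi).sum :=
  S_eq_sum_of_cylinder_nonempty psiRen_apply
    (cylinder_nonempty (descentPoint b) (by simpa [descentPoint, hb] using hw))

def run (m k : ℕ) : List ℕ := (List.range' m k).reverse

lemma run_succ (m k : ℕ) : run m (k + 1) = (m + k) :: run m k := by
  simp [run, List.range'_concat]

lemma run_succ' (m k : ℕ) : run m (k + 1) = run (m + 1) k ++ [m] := by
  simp [run, List.range'_succ]

lemma run_ne_nil {m k : ℕ} (hk : 0 < k) : run m k ≠ [] := by
  simp [run]; omega

lemma getLast?_run {m k : ℕ} (hk : 0 < k) : (run m k).getLast? = some m := by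
  simp [run, List.head?_range']; omega

lemma isChain_run {m : ℕ} (hm : 1 ≤ m) (k : ℕ) : (run m k).IsChain Aren := by
  refine List.isChain_reverse.2 ((List.isChain_range' m k 1).imp_of_mem_imp fun a b ha _ hab => ?_)
  have := (List.mem_range'_1.1 ha).1
  exact Or.inr ⟨by omega, by omega⟩

lemma sum_psi_run (m k : ℕ) : ((run (m + 1) k).map psi).sum = pronicLog (m + k) - pronicLog m := by
  induction k with
  | zero => simp [run]
  | succ k ih =>
    rw [run_succ, List.map_cons, List.sum_cons, ih, show m + 1 + k = (m + k) + 1 by omega, psi_succ]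
    ring_nf

lemma S_run (j k : ℕ) :
    S Aren psiRen (run (j + 2) k) = pronicLog (j + 1 + k) - pronicLog (j + 1) := by
  rw [S_eq_sum_psi (b := j + 1) (by omega) (by rw [← run_succ']; exact isChain_run (by omega) _)]
  exact sum_psi_run (j + 1) k

lemma exists_run_mem_window {η T : ℝ} (hηT : η ≤ T) {j : ℕ} (hj : 2 / (j + 1) < η) :
    ∃ k, 0 < k ∧ T - η < S Aren psiRen (run (j + 2) k) ∧ S Aren psiRen (run (j + 2) k) ≤ T := by
  obtain ⟨n, hn⟩ :=
    (tendsto_pronicLog_atTop.eventually_gt_atTop (T + pronicLog (j + 1))).exists_forall_of_atTop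
  have hstep (k : ℕ) : S Aren psiRen (run (j + 2) (k + 1)) < S Aren psiRen (run (j + 2) k) + η := by
    have h1 := psi_succ (j + 1 + k)
    have h2 := psi_add_two_le (j + k)
    have h3 : (2 : ℝ) / ((j + k : ℕ) + 1) ≤ 2 / (j + 1) := by gcongr; simp
    rw [show j + 1 + k + 1 = j + k + 2 by omega] at h1
    rw [S_run, S_run, show j + 1 + (k + 1) = j + k + 2 by omega]
    linarith
  have hT : 0 < T := by linarith [(div_pos two_pos (by positivity : (0 : ℝ) < j + 1)).trans hj]
  have h0 : S Aren psiRen (run (j + 2) 0) = 0 := by simp [S_run]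
  obtain ⟨k, -, hlo, hhi⟩ := exists_mem_Ioc_of_step_lt (a := fun k => S Aren psiRen (run (j + 2) k))
    (n := n) (h0.trans_le hT.le) (by rw [S_run]; linarith [hn (j + 1 + n) (by omega)]) hstep
  refine ⟨k, Nat.pos_of_ne_zero fun hk => ?_, hlo, hhi⟩
  rw [hk, h0] at hlo
  linarith

lemma infinite_words_window {η T : ℝ} (hη : 0 < η) (hηT : η ≤ T) :
    {w | w ∈ Words Aren ∧ T - η < S Aren psiRen w ∧ S Aren psiRen w ≤ T}.Infinite := by
  obtain ⟨J, hJ⟩ := exists_nat_gt (2 / η)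
  have hsmall (i : ℕ) : 2 / ((J + i : ℕ) + 1 : ℝ) < η := by
    rw [div_lt_iff₀ (by positivity)]
    rw [div_lt_iff₀ hη] at hJ
    push_cast
    nlinarith
  choose k hk using fun i => exists_run_mem_window hηT (hsmall i)
  refine Set.infinite_of_injective_forall_mem (f := fun i => run (J + i + 2) (k i))
    (fun i i' h => ?_)
    fun i => ⟨mem_words_iff.2 ⟨run_ne_nil (hk i).1, isChain_run (by omega) _⟩, (hk i).2⟩
  have := congrArg List.getLast? h
  simp only [getLast?_run (hk i).1, getLast?_run (hk i').1, Option.some.injEq] at this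
  omega

lemma tsum_exp_words_eq_top {T : ℝ} (hT : 0 < T) (β : ℝ) :
    ∑' w : {w : List ℕ // w ∈ Words Aren ∧ T < S Aren psiRen w},
      ENNReal.ofReal (exp (-β * S Aren psiRen w.1)) = ⊤ := by
  refine tsum_eq_top_of_infinite (t := {w | w ∈ Words Aren ∧ T < S Aren psiRen w})
    (f := fun w => ENNReal.ofReal (exp (-β * S Aren psiRen w)))
    (infinite_words_window one_pos (by linarith : (1 : ℝ) ≤ T + 1))
    (fun w hw => ⟨hw.1, by linarith [hw.2.1]⟩)
    (c := ENNReal.ofReal (exp (-|β| * (T + 1)))) (by positivity) fun w hw => ?_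
  refine ENNReal.ofReal_le_ofReal (exp_le_exp.2 ?_)
  have := hw.2.1
  nlinarith [hw.2.2, le_abs_self β, abs_nonneg β]

lemma windowCount_words_eq_top {η T : ℝ} (hη : 0 < η) (hηT : η ≤ T) :
    windowCount (Words Aren) (S Aren psiRen) η T = ⊤ :=
  tsum_eq_top_of_infinite (infinite_words_window hη hηT) subset_rfl one_ne_zero fun _ _ => le_rfl

def loop (k : ℕ) : List ℕ := run 1 (k + 1)

def block (k : ℕ) : List ℕ := 1 :: run 2 k

lemma loop_succ (k : ℕ) : loop (k + 1) = (k + 2) :: loop k := by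
  rw [loop, run_succ, add_comm 1 (k + 1)]; rfl

lemma block_append_one (k : ℕ) : block k ++ [1] = 1 :: loop k := by
  rw [block, loop, run_succ']; rfl

lemma flatMap_block_append_one (l : List ℕ) : l.flatMap block ++ [1] = 1 :: l.flatMap loop := by
  induction l with
  | nil => rfl
  | cons k l ih =>
    rw [List.flatMap_cons, List.append_assoc, ih, ← List.singleton_append, ← List.append_assoc,
      block_append_one, List.flatMap_cons, List.cons_append]

lemma isChain_one_cons_flatMap_loop (l : List ℕ) : (1 :: l.flatMap loop).IsChain Aren := by
  induction l with
  | nil => exact List.isChain_singleton 1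
  | cons k l ih =>
    have hblock : (block k ++ [1]).IsChain Aren := by
      rw [block_append_one, loop]
      refine (isChain_run le_rfl (k + 1)).cons fun y hy => Or.inl ⟨rfl, ?_⟩
      rw [run_succ] at hy
      simp at hy
      omega
    rw [List.flatMap_cons, ← List.cons_append, ← block_append_one]
    exact hblock.append_overlap ih (List.cons_ne_nil _ _)

lemma flatMap_loop_injective : Function.Injective (List.flatMap loop) := by
  intro l₁
  induction l₁ with
  | nil =>
    rintro (_ | ⟨k, l₂⟩) h
    · rfl
    · simp [loop, run_succ] at h
  | cons k₁ l₁ ih =>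
    rintro (_ | ⟨k₂, l₂⟩) h
    · simp [loop, run_succ] at h
    · simp only [List.flatMap_cons, loop, run_succ] at h
      obtain ⟨hk, h⟩ := List.cons_eq_cons.1 h
      obtain rfl : k₁ = k₂ := by omega
      rw [ih (List.append_cancel_left h)]

lemma exists_eq_loop_append {k : ℕ} {s : List ℕ} (hs : ((k + 1) :: s).IsChain Aren)
    (h1 : 1 ∈ (k + 1) :: s) : ∃ t, (k + 1) :: s = loop k ++ t := by
  induction k generalizing s with
  | zero => exact ⟨s, rfl⟩
  | succ k ih =>
    obtain _ | ⟨b, s⟩ := s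
    · simp at h1
    obtain rfl : b = k + 1 := by
      have := (List.isChain_cons_cons.1 hs).1
      simp only [Aren] at this
      omega
    obtain ⟨t, ht⟩ := ih (List.isChain_cons_cons.1 hs).2 (by simpa using h1)
    exact ⟨t, by rw [loop_succ, ht]; rfl⟩

lemma exists_eq_flatMap_loop :
    ∀ {s : List ℕ}, s.IsChain Aren → (∀ a ∈ s.getLast?, a = 1) → ∃ l : List ℕ, s = l.flatMap loop
  | [], _, _ => ⟨[], rfl⟩
  | [0], _, hlast => by simp at hlast
  | 0 :: _ :: _, hs, _ => by simp [Aren] at hs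
  | (k + 1) :: s, hs, hlast => by
    have h1 : 1 ∈ (k + 1) :: s := by
      have := List.getLast_mem (List.cons_ne_nil (k + 1) s)
      rwa [hlast _ (List.getLast?_eq_some_getLast _)] at this
    obtain ⟨t, ht⟩ := exists_eq_loop_append hs h1
    have hlen : t.length < s.length + 1 := by
      have := congrArg List.length ht
      simp [loop, run] at this
      omega
    obtain ⟨l, rfl⟩ := exists_eq_flatMap_loop (s := t) (ht ▸ hs).right_of_append
      fun a ha => hlast a (by rw [ht, List.getLast?_append, ha]; rfl)
    exact ⟨k :: l, ht⟩
termination_by s => s.length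

lemma flatMap_block_injective : Function.Injective (List.flatMap block) := by
  intro l₁ l₂ h
  have := congrArg (· ++ [1]) h
  simp only [flatMap_block_append_one, List.cons.injEq, true_and] at this
  exact flatMap_loop_injective this

lemma flatMap_block_mem_perWords {l : List ℕ} (hl : l ≠ []) :
    l.flatMap block ∈ PerWords Aren 1 := by
  obtain ⟨k, l, rfl⟩ := List.exists_cons_of_ne_nil hl
  rw [mem_perWords_iff, flatMap_block_append_one]
  exact ⟨rfl, isChain_one_cons_flatMap_loop _⟩

lemma exists_flatMap_block_eq {w : List ℕ} (hw : w ∈ PerWords Aren 1) :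
    ∃ l ≠ [], l.flatMap block = w := by
  obtain ⟨hhead, hchain⟩ := mem_perWords_iff.1 hw
  obtain ⟨r, rfl⟩ : ∃ r, w = 1 :: r := ⟨w.tail, (List.cons_head?_tail hhead).symm⟩
  obtain ⟨l, hl⟩ := exists_eq_flatMap_loop (s := r ++ [1]) hchain.tail (by simp)
  refine ⟨l, ?_, List.append_cancel_right (bs := [1]) ?_⟩
  · rintro rfl; simp at hl
  · rw [flatMap_block_append_one, ← hl]; rfl

noncomputable def perWordsEquiv : {l : List ℕ // l ≠ []} ≃ PerWords Aren 1 :=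
  Equiv.ofBijective (fun l => ⟨l.1.flatMap block, flatMap_block_mem_perWords l.2⟩)
    ⟨fun _ _ h => Subtype.ext (flatMap_block_injective (congrArg Subtype.val h)),
      fun w => let ⟨l, hl, hw⟩ := exists_flatMap_block_eq w.2; ⟨⟨l, hl⟩, Subtype.ext hw⟩⟩

lemma sum_psi_block (k : ℕ) : ((block k).map psi).sum = pronicLog (k + 1) := by
  rw [block, List.map_cons, List.sum_cons, sum_psi_run, psi_succ, add_comm 1 k]
  simp [pronicLog]

lemma S_flatMap_block (l : List ℕ) :
    S Aren psiRen (l.flatMap block) = (l.map fun k => pronicLog (k + 1)).sum := by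
  rw [S_eq_sum_psi le_rfl (flatMap_block_append_one l ▸ isChain_one_cons_flatMap_loop l)]
  induction l with
  | nil => rfl
  | cons k l ih => simp [List.flatMap_cons, sum_psi_block, ih]

noncomputable def blockWeight (s : ℝ) (k : ℕ) : ℝ≥0∞ :=
  ENNReal.ofReal (exp (-s * pronicLog (k + 1)))

lemma blockWeight_antitone {s s' : ℝ} (h : s ≤ s') (k : ℕ) : blockWeight s' k ≤ blockWeight s k :=
  ENNReal.ofReal_le_ofReal (exp_le_exp.2 (by nlinarith [pronicLog_nonneg (k + 1)]))

lemma hasSum_one_div_mul_succ :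
    HasSum (fun k : ℕ => 1 / (((k : ℝ) + 1) * ((k : ℝ) + 2))) 1 := by
  rw [hasSum_iff_tendsto_nat_of_nonneg fun k => by positivity]
  have hpartial (n : ℕ) :
      ∑ k ∈ Finset.range n, 1 / (((k : ℝ) + 1) * ((k : ℝ) + 2)) = n / (n + 1) := by
    induction n with
    | zero => simp
    | succ n ih =>
      rw [Finset.sum_range_succ, ih]
      push_cast
      field_simp
      ring
  simpa only [hpartial] using tendsto_natCast_div_add_atTop (1 : ℝ)

lemma tsum_blockWeight_one : ∑' k, blockWeight 1 k = 1 := by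
  have h (k : ℕ) : blockWeight 1 k = ENNReal.ofReal (1 / (((k : ℝ) + 1) * ((k : ℝ) + 2))) := by
    rw [blockWeight, pronicLog, neg_one_mul, exp_neg, exp_log (by positivity), one_div]
    push_cast
    ring_nf
  rw [tsum_congr h, ← ENNReal.ofReal_tsum_of_nonneg (fun k => by positivity)
    hasSum_one_div_mul_succ.summable, hasSum_one_div_mul_succ.tsum_eq, ENNReal.ofReal_one]

lemma tsum_blockWeight_lt_one {s : ℝ} (hs : 1 < s) : ∑' k, blockWeight s k < 1 := by
  rw [← tsum_blockWeight_one]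
  refine ENNReal.tsum_lt_tsum (i := 0) ?_ (blockWeight_antitone hs.le) ?_
  · exact ne_top_of_le_ne_top (by simp [tsum_blockWeight_one])
      (ENNReal.tsum_le_tsum (blockWeight_antitone hs.le))
  · refine (ENNReal.ofReal_lt_ofReal_iff (exp_pos _)).2 (exp_lt_exp.2 ?_)
    have : 0 < pronicLog 1 := log_pos (by norm_num)
    simp only [zero_add]
    nlinarith

lemma one_le_tsum_blockWeight {s : ℝ} (hs : s ≤ 1) : 1 ≤ ∑' k, blockWeight s k :=
  tsum_blockWeight_one ▸ ENNReal.tsum_le_tsum (blockWeight_antitone hs)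

lemma tsum_perWords_eq (s : ℝ) :
    ∑' w : PerWords Aren 1, ENNReal.ofReal (exp (-s * S Aren psiRen w)) =
      ∑' l : {l : List ℕ // l ≠ []}, (l.1.map (blockWeight s)).prod := by
  rw [← perWordsEquiv.tsum_eq]
  refine tsum_congr fun l => ?_
  show ENNReal.ofReal (exp (-s * S Aren psiRen (l.1.flatMap block))) = _
  rw [S_flatMap_block, ofReal_exp_neg_mul_sum]
  rfl

lemma tsum_perWords_ne_top {s : ℝ} (hs : 1 < s) :
    ∑' w : PerWords Aren 1, ENNReal.ofReal (exp (-s * S Aren psiRen w)) ≠ ⊤ := by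
  rw [tsum_perWords_eq]
  refine ne_top_of_le_ne_top ?_ (ENNReal.tsum_comp_le_tsum_of_injective Subtype.val_injective
    fun l : List ℕ => (l.map (blockWeight s)).prod)
  rw [tsum_prod_map, ENNReal.tsum_geometric]
  exact ENNReal.inv_ne_top.2 (tsub_pos_of_lt (tsum_blockWeight_lt_one hs)).ne'

lemma tsum_tail_perWords_eq_top {s : ℝ} (hs : s ≤ 1) (T₀ : ℝ) :
    ∑' w : {w // w ∈ PerWords Aren 1 ∧ T₀ < S Aren psiRen w},
      ENNReal.ofReal (exp (-s * S Aren psiRen w)) = ⊤ := by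
  obtain ⟨k, hk⟩ := (tendsto_pronicLog_atTop.eventually_gt_atTop T₀).exists_forall_of_atTop
  have hS (l : List ℕ) : S Aren psiRen ((k :: l).flatMap block) =
      pronicLog (k + 1) + (l.map fun k => pronicLog (k + 1)).sum := by
    rw [S_flatMap_block, List.map_cons, List.sum_cons]
  let f : List ℕ → {w // w ∈ PerWords Aren 1 ∧ T₀ < S Aren psiRen w} := fun l =>
    ⟨(k :: l).flatMap block, flatMap_block_mem_perWords (List.cons_ne_nil _ _), by
      have := List.sum_nonneg (l := l.map fun k => pronicLog (k + 1)) (by simp [pronicLog_nonneg])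
      rw [hS]
      linarith [hk (k + 1) (by omega)]⟩
  have hf : Function.Injective f := fun l l' h =>
    List.tail_eq_of_cons_eq (flatMap_block_injective (congrArg Subtype.val h))
  refine top_unique ((ENNReal.tsum_comp_le_tsum_of_injective hf _).trans' ?_)
  have hterm (l : List ℕ) : ENNReal.ofReal (exp (-s * S Aren psiRen (f l).1)) =
      blockWeight s k * (l.map (blockWeight s)).prod := by
    rw [show (f l).1 = (k :: l).flatMap block from rfl, S_flatMap_block, ofReal_exp_neg_mul_sum]
    rfl
  rw [tsum_congr hterm, ENNReal.tsum_mul_left, tsum_prod_map, ENNReal.tsum_geometric,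
    tsub_eq_zero_of_le (one_le_tsum_blockWeight hs), ENNReal.inv_zero, ENNReal.mul_top]
  exact (ENNReal.ofReal_pos.2 (exp_pos _)).ne'

end Renewal

/-- For the renewal shift with the potential `ψ` above: for every `T > 0`and `β ∈ ℝ`
the tail sum `Σ_{ω ∈ Σ*, T < S_ω ψ} e^{-β S_ω ψ}` diverges; consequently
`P_ψ(0, Σ*) = +∞`, while `P_ψ(0, Σ₁^per) = 1`. -/
theorem renewal_pressure_infinite :
    (∀ T : ℝ, 0 < T → ∀ β : ℝ,
      (∑' w : {w : List ℕ // w ∈ Words Aren ∧ T < S Aren psiRen w},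
        ENNReal.ofReal (Real.exp (-β * S Aren psiRen w.1))) = ⊤) ∧
    (∀ η : ℝ, 0 < η →
      pressure Aren (fun _ => 0) psiRen (Words Aren) η = ⊤ ∧
      pressure Aren (fun _ => 0) psiRen (PerWords Aren 1) η = (1 : EReal)) := by
  refine ⟨fun T hT β => Renewal.tsum_exp_words_eq_top hT β, fun η hη => ⟨?_, ?_⟩⟩
  · rw [pressure_const_zero]
    exact growthExponent_eq_top
      ((eventually_ge_atTop η).mono fun T hT => Renewal.windowCount_words_eq_top hη hT)
  rw [pressure_const_zero]
  refine le_antisymm (EReal.le_of_forall_lt_iff_le.1 fun s hs => ?_)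
    (EReal.ge_of_forall_gt_iff_ge.1 fun s hs => ?_)
  · have hs : (1 : ℝ) < s := by exact_mod_cast hs
    exact growthExponent_windowCount_le (by linarith) (Renewal.tsum_perWords_ne_top hs)
  · have hs : s < 1 := by exact_mod_cast hs
    exact (EReal.coe_le_coe_iff.2 (le_max_left s 0)).trans <|
      le_growthExponent_windowCount hη (le_max_right s 0)
        (Renewal.tsum_tail_perWords_eq_top (max_le hs.le zero_le_one))
end
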